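/- arXiv:2005.13764 — 6 statements merged into one kernel-verified Lean document; each statement's English description precedes it below -/
import Mathlib

section
/- Let A₁ be an (m+1)×(m+1) complex matrix with block form A₁ = [[A₁⁰, a₁],[a₁*, a₁⁰]] where A₁⁰ is m×m, a₁ is an m-column vector, a₁* its conjugate transpose (a row vector), and a₁⁰ a scalar; and let A₂ be an (n+1)×(n+1) matrix with block form A₂ = [[a₂⁰, a₂*],[a₂, A₂⁰]] where A₂⁰ is n×n. Define the (m+n+1)×(m+n+1) matrix = [[A₁⁰, a₁, 0],[a₁*, a₁⁰+a₂⁰, a₂*],[0, a₂, A₂⁰]]. Then det = det A₁ · det A₂⁰ + det A₁⁰ · det A₂. -/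
/-!
The row of the shared vertex depends linearly on its entries, and it splits as
`(a₁*, a₁⁰, 0) + (0, a₂⁰, a₂*)`. Replacing that row by the first summand makes `Â` block lower
triangular with diagonal blocks `A₁` and `A₂⁰`; replacing it by the second makes `Â`, after
regrouping the indices as `m ⊕ (Unit ⊕ n)`, block upper triangular with diagonal blocks `A₁⁰`
and `A₂`.
-/

open Matrix

namespace Matrix

variable {m n R : Type*} [CommRing R]

/-- `A` and `A'` glued along one shared index carrying the diagonal entry `d`; `b, c` and
`b', c'` are the column and row joining it to either side. -/
def vertexJoin (A : Matrix m m R) (b : Matrix m Unit R) (c : Matrix Unit m R) (d : R)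
    (b' : Matrix Unit n R) (c' : Matrix n Unit R) (A' : Matrix n n R) :
    Matrix ((m ⊕ Unit) ⊕ n) ((m ⊕ Unit) ⊕ n) R :=
  fromBlocks (fromBlocks A b c (of fun _ _ => d)) (fromRows 0 b') (fromCols 0 c') A'

def vertexRow (c : Matrix Unit m R) (d : R) (b' : Matrix Unit n R) : (m ⊕ Unit) ⊕ n → R :=
  Sum.elim (Sum.elim (c ()) fun _ => d) (b' ())

theorem vertexJoin_eq_updateRow [DecidableEq m] [DecidableEq n] (A : Matrix m m R)
    (b : Matrix m Unit R) (c : Matrix Unit m R) (d : R) (b' : Matrix Unit n R)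
    (c' : Matrix n Unit R) (A' : Matrix n n R) :
    vertexJoin A b c d b' c' A' =
      (vertexJoin A b 0 0 0 c' A').updateRow (Sum.inl (Sum.inr ())) (vertexRow c d b') := by
  ext ((i | i) | i) ((j | j) | j) <;> simp [vertexJoin, vertexRow, updateRow_apply]

theorem det_vertexJoin_add [Fintype m] [Fintype n] [DecidableEq m] [DecidableEq n]
    (A : Matrix m m R) (b : Matrix m Unit R) (c : Matrix Unit m R) (d₁ d₂ : R)
    (b' : Matrix Unit n R) (c' : Matrix n Unit R) (A' : Matrix n n R) :
    (vertexJoin A b c (d₁ + d₂) b' c' A').det =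
      (vertexJoin A b c d₁ 0 c' A').det + (vertexJoin A b 0 d₂ b' c' A').det := by
  have hrow : vertexRow c (d₁ + d₂) b' = vertexRow c d₁ 0 + vertexRow 0 d₂ b' := by
    ext ((i | i) | i) <;> simp [vertexRow]
  rw [vertexJoin_eq_updateRow A b c (d₁ + d₂), vertexJoin_eq_updateRow A b c d₁,
    vertexJoin_eq_updateRow A b 0 d₂, hrow, det_updateRow_add]

theorem det_vertexJoin_zero_right [Fintype m] [Fintype n] [DecidableEq m] [DecidableEq n]
    (A : Matrix m m R) (b : Matrix m Unit R) (c : Matrix Unit m R) (d : R)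
    (c' : Matrix n Unit R) (A' : Matrix n n R) :
    (vertexJoin A b c d 0 c' A').det = (fromBlocks A b c (of fun _ _ => d)).det * A'.det := by
  rw [vertexJoin, fromRows_zero, det_fromBlocks_zero₁₂]

theorem vertexJoin_eq_submatrix_sumAssoc (A : Matrix m m R) (b : Matrix m Unit R)
    (c : Matrix Unit m R) (d : R) (b' : Matrix Unit n R) (c' : Matrix n Unit R)
    (A' : Matrix n n R) :
    vertexJoin A b c d b' c' A' =
      (fromBlocks A (fromCols b 0) (fromRows c 0)
        (fromBlocks (of fun _ _ => d) b' c' A')).submatrix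
          (Equiv.sumAssoc m Unit n) (Equiv.sumAssoc m Unit n) := by
  ext ((i | i) | i) ((j | j) | j) <;> rfl

theorem det_vertexJoin_zero_left [Fintype m] [Fintype n] [DecidableEq m] [DecidableEq n]
    (A : Matrix m m R) (b : Matrix m Unit R) (d : R)
    (b' : Matrix Unit n R) (c' : Matrix n Unit R) (A' : Matrix n n R) :
    (vertexJoin A b 0 d b' c' A').det = A.det * (fromBlocks (of fun _ _ => d) b' c' A').det := by
  rw [vertexJoin_eq_submatrix_sumAssoc, det_submatrix_equiv_self, fromRows_zero,
    det_fromBlocks_zero₂₁]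

end Matrix

theorem single_vertex_join_det (m n : ℕ)
    (A₁0 : Matrix (Fin m) (Fin m) ℂ) (a₁ : Matrix (Fin m) Unit ℂ) (a₁0 : ℂ)
    (A₂0 : Matrix (Fin n) (Fin n) ℂ) (a₂ : Matrix (Fin n) Unit ℂ) (a₂0 : ℂ)
    (A₁ : Matrix (Fin m ⊕ Unit) (Fin m ⊕ Unit) ℂ)
    (A₂ : Matrix (Unit ⊕ Fin n) (Unit ⊕ Fin n) ℂ)
    (Ahat : Matrix ((Fin m ⊕ Unit) ⊕ Fin n) ((Fin m ⊕ Unit) ⊕ Fin n) ℂ)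
    (hA₁ : A₁ = fromBlocks A₁0 a₁ a₁ᴴ (Matrix.of fun _ _ => a₁0))
    (hA₂ : A₂ = fromBlocks (Matrix.of fun _ _ => a₂0) a₂ᴴ a₂ A₂0)
    (hAhat : Ahat = fromBlocks
        (fromBlocks A₁0 a₁ a₁ᴴ (Matrix.of fun _ _ => a₁0 + a₂0))
        (fromRows 0 a₂ᴴ) (fromCols 0 a₂) A₂0) :
    Ahat.det = A₁.det * A₂0.det + A₁0.det * A₂.det := by
  have hjoin : Ahat = vertexJoin A₁0 a₁ a₁ᴴ (a₁0 + a₂0) a₂ᴴ a₂ A₂0 := hAhat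
  rw [hjoin, det_vertexJoin_add, det_vertexJoin_zero_right, det_vertexJoin_zero_left, hA₁, hA₂]
end

section
/- With the block matrices A₁, A₂, as in the single-vertex-join determinant identity, and for a scalar β, let Â_β be with its middle diagonal entry a₁⁰+a₂⁰ replaced by a₁⁰+a₂⁰+β. Then det Â_β = det A₁ · det A₂⁰ + det A₁⁰ · det A₂ + β · det A₁⁰ · det A₂⁰. -/
/-!
The determinant is linear in the row of the joined vertex. Writing that row as
`(a₁*, a₁⁰, 0) + (0, a₂⁰ + β, a₂*)` splits `det Â_β` into the determinants of two block
triangular matrices, `det A₁ · det A₂⁰` and (after reassociating `(m ⊕ 1) ⊕ n ≃ m ⊕ (1 ⊕ n)`)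
`det A₁⁰ · det A₂(β)`, where `A₂(β)` is `A₂` with corner `a₂⁰ + β`. Splitting the first row of
`A₂(β)` in the same way gives `det A₂(β) = det A₂ + β · det A₂⁰`.
-/

open Matrix

namespace Matrix

variable {R ι κ : Type*} [CommRing R] [Fintype ι] [Fintype κ] [DecidableEq ι] [DecidableEq κ]

theorem det_eq_det_updateRow_add_det_updateRow (M : Matrix ι ι R) (i : ι) {u v : ι → R}
    (h : M i = u + v) : M.det = (M.updateRow i u).det + (M.updateRow i v).det := by
  rw [← det_updateRow_add, ← h, updateRow_eq_self]

theorem det_fromBlocks_corner_add (A : Matrix ι ι R) (b : Matrix ι Unit R) (c : Matrix Unit ι R)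
    (d e : R) :
    (fromBlocks (of fun _ _ => d + e) c b A).det =
      (fromBlocks (of fun _ _ => d) c b A).det + e * A.det := by
  rw [det_eq_det_updateRow_add_det_updateRow _ (Sum.inl ())
    (u := Sum.elim (fun _ => d) (c ())) (v := Sum.elim (fun _ => e) 0)]
  · congr 1
    · congr 1
      ext (i | i) (j | j) <;> simp [updateRow_apply]
    · have hcorner : e * A.det = (fromBlocks (of fun _ _ => e) 0 b A).det := by
        rw [det_fromBlocks_zero₁₂, det_unique (of fun _ _ => e)]
        rfl
      rw [hcorner]
      congr 1
      ext (i | i) (j | j) <;> simp [updateRow_apply]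
  · ext (j | j) <;> simp

theorem det_singleVertexJoin (A₁ : Matrix ι ι R) (b₁ : Matrix ι Unit R) (c₁ : Matrix Unit ι R)
    (A₂ : Matrix κ κ R) (b₂ : Matrix κ Unit R) (c₂ : Matrix Unit κ R) (d₁ d₂ : R) :
    (fromBlocks (fromBlocks A₁ b₁ c₁ (of fun _ _ => d₁ + d₂)) (fromRows 0 c₂) (fromCols 0 b₂)
        A₂).det =
      (fromBlocks A₁ b₁ c₁ (of fun _ _ => d₁)).det * A₂.det +
        A₁.det * (fromBlocks (of fun _ _ => d₂) c₂ b₂ A₂).det := by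
  rw [det_eq_det_updateRow_add_det_updateRow _ (Sum.inl (Sum.inr ()))
    (u := Sum.elim (Sum.elim (c₁ ()) fun _ => d₁) 0)
    (v := Sum.elim (Sum.elim 0 fun _ => d₂) (c₂ ()))]
  · congr 1
    · rw [← det_fromBlocks_zero₁₂ _ (fromCols 0 b₂)]
      congr 1
      ext ((i | i) | i) ((j | j) | j) <;> simp [updateRow_apply]
    · rw [← det_fromBlocks_zero₂₁ _ (fromCols b₁ 0),
        ← det_submatrix_equiv_self (Equiv.sumAssoc ι Unit κ)]
      congr 1
      ext ((i | i) | i) ((j | j) | j) <;> simp [updateRow_apply]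
  · ext ((j | j) | j) <;> simp

end Matrix

theorem single_vertex_join_det_robin (m n : ℕ) (β : ℂ)
    (A₁0 : Matrix (Fin m) (Fin m) ℂ) (a₁ : Matrix (Fin m) Unit ℂ) (a₁0 : ℂ)
    (A₂0 : Matrix (Fin n) (Fin n) ℂ) (a₂ : Matrix (Fin n) Unit ℂ) (a₂0 : ℂ)
    (A₁ : Matrix (Fin m ⊕ Unit) (Fin m ⊕ Unit) ℂ)
    (A₂ : Matrix (Unit ⊕ Fin n) (Unit ⊕ Fin n) ℂ)
    (Ahatβ : Matrix ((Fin m ⊕ Unit) ⊕ Fin n) ((Fin m ⊕ Unit) ⊕ Fin n) ℂ)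
    (hA₁ : A₁ = fromBlocks A₁0 a₁ a₁ᴴ (Matrix.of fun _ _ => a₁0))
    (hA₂ : A₂ = fromBlocks (Matrix.of fun _ _ => a₂0) a₂ᴴ a₂ A₂0)
    (hAhatβ : Ahatβ = fromBlocks
        (fromBlocks A₁0 a₁ a₁ᴴ (Matrix.of fun _ _ => a₁0 + a₂0 + β))
        (fromRows 0 a₂ᴴ) (fromCols 0 a₂) A₂0) :
    Ahatβ.det = A₁.det * A₂0.det + A₁0.det * A₂.det + β * A₁0.det * A₂0.det := by
  subst hA₁ hA₂ hAhatβ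
  rw [add_assoc, det_singleVertexJoin, det_fromBlocks_corner_add]
  ring
end

section
/- Let B₁ and B₂ be invertible (n+m₁)×(n+m₁) and (n+m₂)×(n+m₂) complex matrices respectively, let Q be the (n+m₁)×(n+m₂) matrix with the n×n identity in the upper-left block and zeros elsewhere, and let w ∈ ℂ. Then the determinant of the block matrix M(w) = [[B₁, wQ],[w̄'Q^T, B₂]] (where w̄' ∈ ℂ is a second scalar) equals det(B₁)·det(B₂ − w·w̄'·Q^T B₁⁻¹ Q), which is a polynomial in the product ζ = w·w̄' of degree at most n with coefficients depending only on B₁, B₂. -/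
open Matrix Polynomial

/-! The Schur complement with respect to `B₁` gives the factorization. Since `Q` is the
projection onto the first `n` coordinates, `Qᵀ B₁⁻¹ Q` vanishes outside its upper-left
`n × n` block, so `ζ` enters only the first `n` rows of `B₂ - ζ • Qᵀ B₁⁻¹ Q`, and each term
of the Leibniz expansion of its determinant has degree at most `n` in `ζ`. -/

theorem det_fromBlocks_smul_smul {m n R : Type*} [Fintype m] [Fintype n] [DecidableEq m]
    [DecidableEq n] [CommRing R] (A : Matrix m m R) [Invertible A] (B : Matrix m n R)
    (C : Matrix n m R) (D : Matrix n n R) (w w' : R) :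
    (fromBlocks A (w • B) (w' • C) D).det = A.det * (D - (w * w') • (C * A⁻¹ * B)).det := by
  rw [det_fromBlocks₁₁, invOf_eq_nonsing_inv, Matrix.smul_mul, Matrix.smul_mul,
    Matrix.mul_smul, smul_smul, mul_comm w' w]

theorem transpose_fromBlocks_one_mul_mul_fromBlocks_one {l m n R : Type*} [Fintype l]
    [Fintype m] [DecidableEq l] [CommRing R] (A : Matrix (l ⊕ m) (l ⊕ m) R) :
    (fromBlocks (1 : Matrix l l R) 0 0 0 : Matrix (l ⊕ m) (l ⊕ n) R)ᵀ * A *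
        (fromBlocks (1 : Matrix l l R) 0 0 0 : Matrix (l ⊕ m) (l ⊕ n) R) =
      fromBlocks A.toBlocks₁₁ 0 0 0 := by
  conv_lhs => rw [← fromBlocks_toBlocks A]
  simp [fromBlocks_transpose, fromBlocks_multiply]

theorem natDegree_det_le_sum_of_row_le {ι R : Type*} [Fintype ι] [DecidableEq ι]
    [CommRing R] (A : Matrix ι ι R[X]) (d : ι → ℕ) (h : ∀ i j, (A i j).natDegree ≤ d i) :
    A.det.natDegree ≤ ∑ i, d i := by
  rw [← det_transpose, det_apply]
  refine natDegree_sum_le_of_forall_le _ _ fun σ _ => ?_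
  rw [Units.smul_def]
  refine (natDegree_smul_le _ _).trans ((natDegree_prod_le _ _).trans ?_)
  exact Finset.sum_le_sum fun i _ => h i (σ i)

theorem natDegree_det_sub_X_smul_le {ι κ R : Type*} [Fintype ι] [Fintype κ] [DecidableEq ι]
    [DecidableEq κ] [CommRing R] (B M : Matrix (ι ⊕ κ) (ι ⊕ κ) R)
    (hM : ∀ k j, M (Sum.inr k) j = 0) :
    (B.map C - (X : R[X]) • M.map C).det.natDegree ≤ Fintype.card ι := by
  refine (natDegree_det_le_sum_of_row_le _ (Sum.elim 1 0) ?_).trans ?_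
  · rintro (i | k) j
    · simp only [Matrix.sub_apply, Matrix.map_apply, Matrix.smul_apply, smul_eq_mul,
        Sum.elim_inl, Pi.one_apply]
      compute_degree
    · simp [hM]
  · simp

theorem eval_det_sub_X_smul {ι R : Type*} [Fintype ι] [DecidableEq ι] [CommRing R]
    (B M : Matrix ι ι R) (r : R) :
    (B.map C - (X : R[X]) • M.map C).det.eval r = (B - r • M).det := by
  rw [← coe_evalRingHom, RingHom.map_det]
  congr 1
  ext i j
  simp [mul_comm r]

theorem eval_eq_sum_fin_of_natDegree_le {R : Type*} [CommSemiring R] {p : R[X]} {n : ℕ}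
    (hp : p.natDegree ≤ n) (x : R) : p.eval x = ∑ j : Fin (n + 1), p.coeff j * x ^ (j : ℕ) := by
  rw [eval_eq_sum_range' (Nat.lt_succ_of_le hp),
    Fin.sum_univ_eq_sum_range (fun j => p.coeff j * x ^ j)]

theorem type2_dispersion_polynomial_general (n m₁ m₂ : ℕ)
    (B₁ : Matrix (Fin n ⊕ Fin m₁) (Fin n ⊕ Fin m₁) ℂ)
    (B₂ : Matrix (Fin n ⊕ Fin m₂) (Fin n ⊕ Fin m₂) ℂ)
    [Invertible B₁]
    (Q : Matrix (Fin n ⊕ Fin m₁) (Fin n ⊕ Fin m₂) ℂ)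
    (hQ : Q = fromBlocks (1 : Matrix (Fin n) (Fin n) ℂ) 0 0 0) :
    ∃ c : Fin (n + 1) → ℂ, ∀ w w' : ℂ,
      (fromBlocks B₁ (w • Q) (w' • Qᵀ) B₂).det
        = B₁.det * (B₂ - (w * w') • (Qᵀ * B₁⁻¹ * Q)).det
      ∧ (fromBlocks B₁ (w • Q) (w' • Qᵀ) B₂).det
        = ∑ j : Fin (n + 1), c j * (w * w') ^ (j : ℕ) := by
  have hrows : ∀ k j, (Qᵀ * B₁⁻¹ * Q) (Sum.inr k) j = 0 := by
    simp [hQ, transpose_fromBlocks_one_mul_mul_fromBlocks_one]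
  set p := (B₂.map C - (X : ℂ[X]) • (Qᵀ * B₁⁻¹ * Q).map C).det
  have hp : p.natDegree ≤ n := by
    simpa only [Fintype.card_fin] using natDegree_det_sub_X_smul_le B₂ _ hrows
  refine ⟨fun j => B₁.det * p.coeff j, fun w w' => ⟨det_fromBlocks_smul_smul .., ?_⟩⟩
  rw [det_fromBlocks_smul_smul, ← eval_det_sub_X_smul, eval_eq_sum_fin_of_natDegree_le hp,
    Finset.mul_sum]
  simp only [mul_assoc]

theorem type2_dispersion_polynomial (n m₁ m₂ : ℕ)
    (B₁ : Matrix (Fin n ⊕ Fin m₁) (Fin n ⊕ Fin m₁) ℂ)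
    (B₂ : Matrix (Fin n ⊕ Fin m₂) (Fin n ⊕ Fin m₂) ℂ)
    [Invertible B₁] [Invertible B₂]
    (Q : Matrix (Fin n ⊕ Fin m₁) (Fin n ⊕ Fin m₂) ℂ)
    (hQ : Q = fromBlocks (1 : Matrix (Fin n) (Fin n) ℂ) 0 0 0) :
    ∃ c : Fin (n + 1) → ℂ, ∀ w w' : ℂ,
      (fromBlocks B₁ (w • Q) (w' • Qᵀ) B₂).det
        = B₁.det * (B₂ - (w * w') • (Qᵀ * B₁⁻¹ * Q)).det
      ∧ (fromBlocks B₁ (w • Q) (w' • Qᵀ) B₂).det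
        = ∑ j : Fin (n + 1), c j * (w * w') ^ (j : ℕ) :=
  type2_dispersion_polynomial_general n m₁ m₂ B₁ B₂ Q hQ
end

section
/- Let T₁ = [[c₁,s₁],[c₁',s₁']] and T₂ = [[c₂,s₂],[c₂',s₂']] be 2×2 matrices over a field with det T₁ = det T₂ = 1, and let T = T₂T₁ = [[c,s],[c',s']]. Assume s₁ ≠ 0 and s₂ ≠ 0. Then the determinant of the 3×3 matrix [[−c₁/s₁, 1/s₁, 0],[1/s₁, −s₁'/s₁ − c₂/s₂, 1/s₂],[0, 1/s₂, −s₂'/s₂]] equals −c'/(s₁s₂). -/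
open Matrix

theorem dotted_edge_det_neumann {F : Type*} [Field F]
    (c₁ s₁ c₁' s₁' c₂ s₂ c₂' s₂' : F)
    (h₁ : (!![c₁, s₁; c₁', s₁'] : Matrix (Fin 2) (Fin 2) F).det = 1)
    (h₂ : (!![c₂, s₂; c₂', s₂'] : Matrix (Fin 2) (Fin 2) F).det = 1)
    (hs₁ : s₁ ≠ 0) (hs₂ : s₂ ≠ 0) :
    (!![-c₁ / s₁, 1 / s₁, 0;
        1 / s₁, -s₁' / s₁ - c₂ / s₂, 1 / s₂;
        0, 1 / s₂, -s₂' / s₂] : Matrix (Fin 3) (Fin 3) F).det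
      = -((!![c₂, s₂; c₂', s₂'] * !![c₁, s₁; c₁', s₁']) 1 0) / (s₁ * s₂) := by
  simp [Matrix.det_fin_three, Matrix.det_fin_two, Matrix.mul_apply, Fin.sum_univ_succ] at *
  linear_combination (-s₂' * s₁⁻¹ ^ 2 * s₂⁻¹) * h₁ + (-c₁ * s₁⁻¹ * s₂⁻¹ ^ 2) * h₂ +
    (-c₁' * s₂' * s₁⁻¹ * s₂⁻¹) * (mul_inv_cancel₀ hs₁) +
    (-c₁ * c₂' * s₁⁻¹ * s₂⁻¹) * (mul_inv_cancel₀ hs₂)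
end

section
/- With T = T₂T₁ as above (all 2×2 with determinant 1, s₁ ≠ 0, s₂ ≠ 0), and scalars α₁, α₂: the determinant of [[−c₁/s₁ − α₁, 1/s₁, 0],[1/s₁, −s₁'/s₁ − c₂/s₂, 1/s₂],[0, 1/s₂, −s₂'/s₂ − α₂]] equals −(c' + α₁s' + α₂c + α₁α₂s)/(s₁s₂), where [[c,s],[c',s']] = T₂T₁. -/
open Matrix

theorem dotted_edge_det_robin {F : Type*} [Field F]
    (c₁ s₁ c₁' s₁' c₂ s₂ c₂' s₂' α₁ α₂ : F)
    (h₁ : (!![c₁, s₁; c₁', s₁'] : Matrix (Fin 2) (Fin 2) F).det = 1)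
    (h₂ : (!![c₂, s₂; c₂', s₂'] : Matrix (Fin 2) (Fin 2) F).det = 1)
    (hs₁ : s₁ ≠ 0) (hs₂ : s₂ ≠ 0) :
    (!![-c₁ / s₁ - α₁, 1 / s₁, 0;
        1 / s₁, -s₁' / s₁ - c₂ / s₂, 1 / s₂;
        0, 1 / s₂, -s₂' / s₂ - α₂] : Matrix (Fin 3) (Fin 3) F).det
      = -((!![c₂, s₂; c₂', s₂'] * !![c₁, s₁; c₁', s₁']) 1 0
          + α₁ * ((!![c₂, s₂; c₂', s₂'] * !![c₁, s₁; c₁', s₁']) 1 1)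
          + α₂ * ((!![c₂, s₂; c₂', s₂'] * !![c₁, s₁; c₁', s₁']) 0 0)
          + α₁ * α₂ * ((!![c₂, s₂; c₂', s₂'] * !![c₁, s₁; c₁', s₁']) 0 1))
        / (s₁ * s₂) := by
  rw [det_fin_two_of] at h₁ h₂
  have hc₁' : c₁' = (c₁ * s₁' - 1) / s₁ := by rw [eq_div_iff hs₁]; linear_combination -h₁
  have hc₂' : c₂' = (c₂ * s₂' - 1) / s₂ := by rw [eq_div_iff hs₂]; linear_combination -h₂
  subst hc₁' hc₂'
  clear h₁ h₂
  simp [det_fin_three, mul_apply, Fin.sum_univ_succ]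
  linear_combination
      (-(α₁ * s₂⁻¹ ^ 2) + c₂ * α₁ * α₂ * s₂⁻¹ + c₂ * s₂' * α₁ * s₂⁻¹ ^ 2) *
        mul_inv_cancel₀ hs₁ +
      (-(α₂ * s₁⁻¹ ^ 2) + s₁' * α₁ * α₂ * s₁⁻¹ + c₁ * s₁' * α₂ * s₁⁻¹ ^ 2) *
        mul_inv_cancel₀ hs₂
end

section
/- The 4×4 complex matrix A = [[−3,0,w,0],[0,−3,0,w],[w',0,−3,0],[0,w',0,−3]] + [[−1,0,0,1],[0,−2,1,0],[0,1,−1,0],[1,0,0,−1]], where w = 1 + z₁⁻¹ + z₂⁻¹ and w' = 1 + z₁ + z₂, has determinant equal to a Laurent polynomial in z₁, z₂ that is irreducible in the ring of Laurent polynomials ℂ[z₁^{±1}, z₂^{±1}] modulo units (monomials); i.e., det A cannot be written as a product f·g of two Laurent polynomials f, g ∈ ℂ[z₁^{±1}, z₂^{±1}] neither of which is a monomial. -/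
/-!
In the coordinates `x = z₁`, `y = z₁ z₂⁻¹` one has `x y² · det A = Q(x)` with
`Q = 2K(y) x² + L(y) x + 2y K(y)`, `K = y³ - 15y² - 15y + 1`, `L = y⁴ - 28y³ + 190y² - 28y + 1`.
Over the domain `ℂ[y^±1]` the coefficients `2K` and `L` are coprime, so a factorization of `Q`
in `ℂ[y^±1][x]` has no constant non-unit factor, and a splitting into two linear factors would
make the discriminant `L² - 16yK²` a square, which it is not: it is coprime to its derivative
and not constant. Since `Q(0) ≠ 0`, irreducibility passes from `ℂ[y^±1][x]` to
`ℂ[y^±1][x^±1] ≅ ℂ[z₁^±1, z₂^±1]`, whose units are the nonzero monomials.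
-/

open Matrix

noncomputable def LaurentZZ := AddMonoidAlgebra ℂ (ℤ × ℤ)

noncomputable instance : CommRing LaurentZZ := AddMonoidAlgebra.commRing

/-- monomial `c·z₁^a·z₂^b` -/
def LaurentZZ.IsMonomial (f : LaurentZZ) : Prop :=
  ∃ (a : ℤ × ℤ) (c : ℂ), f = AddMonoidAlgebra.single a c

noncomputable def zz (a b : ℤ) : LaurentZZ := AddMonoidAlgebra.single (a, b) 1

theorem isCoprime_of_isUnit_mul_add_mul {R : Type*} [CommSemiring R] {a b u v : R}
    (h : IsUnit (u * a + v * b)) : IsCoprime a b := by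
  obtain ⟨w, hw⟩ := h.exists_left_inv
  exact ⟨w * u, w * v, by rw [← hw]; ring⟩

namespace Polynomial

variable {R : Type*} [CommRing R]

theorem isSquare_discrim_of_eq_linear_mul_linear {a b c f₀ f₁ g₀ g₁ : R}
    (h : C a * X ^ 2 + C b * X + C c = (C f₁ * X + C f₀) * (C g₁ * X + C g₀)) :
    IsSquare (discrim a b c) := by
  replace h : C a * X ^ 2 + C b * X + C c =
      C (f₁ * g₁) * X ^ 2 + C (f₁ * g₀ + f₀ * g₁) * X + C (f₀ * g₀) := by
    rw [h]; simp only [map_mul, map_add]; ring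
  have hcoeff (n : ℕ) := congrArg (coeff · n) h
  have ha := hcoeff 2
  have hb := hcoeff 1
  have hc := hcoeff 0
  simp only [coeff_add, coeff_C_mul, coeff_X_pow, coeff_X, coeff_C] at ha hb hc
  norm_num at ha hb hc
  exact ⟨f₁ * g₀ - f₀ * g₁, by rw [discrim, ha, hb, hc]; ring⟩

variable [IsDomain R]

theorem irreducible_quadratic_of_isRelPrime_of_not_isSquare_discrim {a b c : R}
    (hab : IsRelPrime a b) (hdisc : ¬ IsSquare (discrim a b c)) :
    Irreducible (C a * X ^ 2 + C b * X + C c) := by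
  have ha : a ≠ 0 := by
    rintro rfl
    exact hdisc ⟨b, by rw [discrim, sq]; ring⟩
  have hdeg := natDegree_quadratic (b := b) (c := c) ha
  have isUnit_of_natDegree_eq_zero {F G : R[X]} (h : C a * X ^ 2 + C b * X + C c = F * G)
      (hF : F.natDegree = 0) : IsUnit F := by
    rw [eq_C_of_natDegree_eq_zero hF] at h ⊢
    have hdvd := (C_dvd_iff_dvd_coeff _ _).mp (Dvd.intro G h.symm)
    exact isUnit_C.mpr (hab (by simpa using hdvd 2) (by simpa using hdvd 1))
  refine ⟨fun hu => by simp [natDegree_eq_zero_of_isUnit hu] at hdeg, fun F G h => ?_⟩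
  have hFG : F * G ≠ 0 := by
    rintro hFG
    rw [h, hFG] at hdeg
    simp at hdeg
  rw [h, natDegree_mul (left_ne_zero_of_mul hFG) (right_ne_zero_of_mul hFG)] at hdeg
  by_cases hF : F.natDegree = 0
  · exact .inl (isUnit_of_natDegree_eq_zero h hF)
  by_cases hG : G.natDegree = 0
  · exact .inr (isUnit_of_natDegree_eq_zero (h.trans (mul_comm F G)) hG)
  rw [eq_X_add_C_of_natDegree_le_one (p := F) (by omega),
    eq_X_add_C_of_natDegree_le_one (p := G) (by omega)] at h
  exact absurd (isSquare_discrim_of_eq_linear_mul_linear h) hdisc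

end Polynomial

open LaurentPolynomial

namespace LaurentPolynomial

open Polynomial

variable {R : Type*}

theorem exists_eq_toLaurent_mul_T [CommRing R] {f : R[T;T⁻¹]} (hf : f ≠ 0) :
    ∃ (p : R[X]) (n : ℤ), p.coeff 0 ≠ 0 ∧ f = toLaurent p * T n := by
  obtain ⟨m, p, hp⟩ := exists_T_pow f
  have hp0 : p ≠ 0 := by
    rintro rfl
    exact hf ((isUnit_T (m : ℤ)).mul_left_eq_zero.mp (by rw [← hp, map_zero]))
  obtain ⟨q, hpq, hq⟩ := p.exists_eq_pow_rootMultiplicity_mul_and_not_dvd hp0 0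
  rw [map_zero, sub_zero] at hpq hq
  refine ⟨q, p.rootMultiplicity 0 - m, fun h => hq (X_dvd_iff.mpr h), ?_⟩
  rw [T_sub, ← mul_assoc, mul_comm (toLaurent q), ← toLaurent_X_pow, ← map_mul, ← hpq, hp,
    mul_assoc, ← T_add, add_neg_cancel, T_zero, mul_one]

theorem eq_of_toLaurent_mul_T_eq [Semiring R] {p q : R[X]} {m n : ℤ} (hp : p.coeff 0 ≠ 0)
    (hq : q.coeff 0 ≠ 0) (h : toLaurent p * T m = toLaurent q * T n) : p = q := by
  wlog hmn : m ≤ n generalizing p q m n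
  · exact (this hq hp h.symm (le_of_not_ge hmn)).symm
  obtain ⟨k, rfl⟩ := Int.le.dest hmn
  have hpq : p = q * X ^ k := by
    apply toLaurent_injective
    rw [map_mul, toLaurent_X_pow]
    refine (isUnit_T m).mul_right_cancel ?_
    rw [h, T_add, mul_assoc, T_mul]
  rcases k with _ | k
  · simpa using hpq
  · exact absurd (by simp [hpq]) hp

variable [CommRing R] [IsDomain R]

theorem exists_eq_mul_of_toLaurent_eq_mul {Q : R[X]} (hQ : Q.coeff 0 ≠ 0) {F G : R[T;T⁻¹]}
    (h : toLaurent Q = F * G) :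
    ∃ (F₀ G₀ : R[X]) (a b : ℤ), Q = F₀ * G₀ ∧ F = toLaurent F₀ * T a ∧ G = toLaurent G₀ * T b := by
  have hFG : F * G ≠ 0 := by
    rw [← h, Ne, toLaurent_eq_zero]
    rintro rfl
    exact hQ (coeff_zero 0)
  obtain ⟨F₀, a, hF₀, rfl⟩ := exists_eq_toLaurent_mul_T (left_ne_zero_of_mul hFG)
  obtain ⟨G₀, b, hG₀, rfl⟩ := exists_eq_toLaurent_mul_T (right_ne_zero_of_mul hFG)
  refine ⟨F₀, G₀, a, b, eq_of_toLaurent_mul_T_eq (m := 0) (n := a + b) hQ ?_ ?_, rfl, rfl⟩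
  · rw [mul_coeff_zero]
    exact mul_ne_zero hF₀ hG₀
  · rw [T_zero, mul_one, h, map_mul, T_add]
    ring

theorem exists_C_mul_T_of_isUnit {f : R[T;T⁻¹]} (hf : IsUnit f) :
    ∃ (u : R) (n : ℤ), IsUnit u ∧ f = C u * T n := by
  obtain ⟨g, hfg⟩ := hf.exists_right_inv
  obtain ⟨F₀, G₀, a, -, h1, rfl, -⟩ :=
    exists_eq_mul_of_toLaurent_eq_mul (Q := (1 : R[X])) (by simp) (by rw [map_one, hfg])
  obtain ⟨u, hu, rfl⟩ := Polynomial.isUnit_iff.mp (IsUnit.of_mul_eq_one _ h1.symm)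
  exact ⟨u, a, hu, by rw [toLaurent_C]⟩

theorem irreducible_toLaurent {Q : R[X]} (hQ : Irreducible Q) (hQ0 : Q.coeff 0 ≠ 0) :
    Irreducible (toLaurent Q) := by
  refine ⟨fun hu => hQ.not_isUnit ?_, fun F G h => ?_⟩
  · obtain ⟨u, n, hu, hQu⟩ := exists_C_mul_T_of_isUnit hu
    have : Q = Polynomial.C u := by
      refine eq_of_toLaurent_mul_T_eq (m := 0) (n := n) hQ0 (by simpa using hu.ne_zero) ?_
      rw [T_zero, mul_one, hQu, toLaurent_C]
    exact this ▸ isUnit_C.mpr hu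
  · obtain ⟨F₀, G₀, a, b, hQFG, rfl, rfl⟩ := exists_eq_mul_of_toLaurent_eq_mul hQ0 h
    refine (hQ.isUnit_or_isUnit hQFG).imp (fun hF => ?_) (fun hG => ?_)
    · exact (hF.map toLaurent).mul (isUnit_T a)
    · exact (hG.map toLaurent).mul (isUnit_T b)

theorem isSquare_of_isSquare_toLaurent {p : R[X]} (hp : p.coeff 0 ≠ 0)
    (h : IsSquare (toLaurent p)) : IsSquare p := by
  obtain ⟨s, hs⟩ := h
  obtain ⟨F₀, G₀, a, b, rfl, hF, hG⟩ := exists_eq_mul_of_toLaurent_eq_mul hp hs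
  rw [mul_coeff_zero] at hp
  exact ⟨F₀, by rw [eq_of_toLaurent_mul_T_eq (left_ne_zero_of_mul hp) (right_ne_zero_of_mul hp)
    (hF.symm.trans hG)]⟩

end LaurentPolynomial

namespace CrossedBilayer

section

open Polynomial

noncomputable def K : ℂ[X] := X ^ 3 - 15 * X ^ 2 - 15 * X + 1

noncomputable def L : ℂ[X] := X ^ 4 - 28 * X ^ 3 + 190 * X ^ 2 - 28 * X + 1

noncomputable def Q : ℂ[T;T⁻¹][X] :=
  Polynomial.C (toLaurent (2 * K)) * X ^ 2 + Polynomial.C (toLaurent L) * X +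
    Polynomial.C (toLaurent (2 * X * K))

theorem isCoprime_two_mul_K_L : IsCoprime (2 * K) L := by
  refine isCoprime_of_isUnit_mul_add_mul (u := 30249 - 351461 * X + 52159 * X ^ 2 - 1867 * X ^ 3)
    (v := 2 * (-29753 - 27888 * X + 1867 * X ^ 2)) ?_
  convert isUnit_C.mpr (isUnit_iff_ne_zero.mpr (by norm_num : (992 : ℂ) ≠ 0)) using 1
  rw [K, L, map_ofNat]
  ring

theorem separable_discrim : (discrim (2 * K) L (2 * X * K)).Separable := by
  refine isCoprime_of_isUnit_mul_add_mul
    (u := -8761226282256 + 260449441612968 * X - 898070374855368 * X ^ 2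
      + 523504429443408 * X ^ 3 - 75184835584448 * X ^ 4 + 3850087324552 * X ^ 5
      - 61173577512 * X ^ 6)
    (v := -121699279378 + 6820979213063 * X - 91421038816770 * X ^ 2
      + 226154208763791 * X ^ 3 - 104858170287534 * X ^ 4 + 12536567926693 * X ^ 5
      - 550081190270 * X ^ 6 + 7646697189 * X ^ 7) ?_
  convert isUnit_C.mpr (isUnit_iff_ne_zero.mpr (by norm_num : (1121832960 : ℂ) ≠ 0)) using 1
  simp only [discrim, K, L, derivative_sub, derivative_add, derivative_mul, derivative_pow,
    derivative_X, derivative_ofNat, derivative_one, map_ofNat, Nat.cast_ofNat]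
  norm_num
  ring

theorem discrim_coeff_zero : (discrim (2 * K) L (2 * X * K)).coeff 0 = 1 := by
  rw [coeff_zero_eq_eval_zero]
  norm_num [discrim, K, L]

theorem not_isSquare_discrim : ¬ IsSquare (discrim (2 * K) L (2 * X * K)) := by
  rintro ⟨s, hs⟩
  have hs_unit : IsUnit s := separable_discrim.squarefree s ⟨1, by rw [hs, mul_one]⟩
  obtain ⟨r, -, hr⟩ := Polynomial.isUnit_iff.mp (hs ▸ hs_unit.mul hs_unit)
  have h0 := congrArg (eval 0) hr
  have h1 := congrArg (eval 1) hr
  norm_num [discrim, K, L] at h0 h1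
  norm_num [h0] at h1

theorem irreducible_toLaurent_Q : Irreducible (toLaurent Q) := by
  have hdisc : discrim (toLaurent (2 * K)) (toLaurent L) (toLaurent (2 * X * K)) =
      toLaurent (discrim (2 * K) L (2 * X * K)) := by
    simp only [discrim, map_sub, map_mul, map_pow, map_ofNat]
  refine irreducible_toLaurent (irreducible_quadratic_of_isRelPrime_of_not_isSquare_discrim
    (isCoprime_two_mul_K_L.map toLaurent).isRelPrime ?_) ?_
  · rw [hdisc]
    exact fun h => not_isSquare_discrim
      (isSquare_of_isSquare_toLaurent (by rw [discrim_coeff_zero]; exact one_ne_zero) h)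
  · have hK : K ≠ 0 := fun h => by simpa [K] using congrArg (eval 0) h
    have hQ0 : Q.coeff 0 = toLaurent (2 * X * K) := by simp [Q]
    rw [hQ0, Ne, toLaurent_eq_zero]
    exact mul_ne_zero (mul_ne_zero two_ne_zero X_ne_zero) hK

end

def bilayerMatrix {S : Type*} [CommRing S] (w w' : S) : Matrix (Fin 4) (Fin 4) S :=
  !![-3, 0, w, 0; 0, -3, 0, w; w', 0, -3, 0; 0, w', 0, -3] +
    !![-1, 0, 0, 1; 0, -2, 1, 0; 0, 1, -1, 0; 1, 0, 0, -1]

theorem det_bilayerMatrix {S : Type*} [CommRing S] (w w' : S) :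
    (bilayerMatrix w w').det = (w * w') ^ 2 - 36 * (w * w') - w ^ 2 - w' ^ 2 + 285 := by
  simp [bilayerMatrix, det_succ_row_zero, Fin.sum_univ_succ, Fin.succAbove]
  ring

theorem bilayer_identity {S : Type*} [CommRing S] {x y w w' : S} (hw : x * w = 1 + x + y)
    (hw' : y * w' = x + y + x * y) :
    x ^ 2 * y ^ 2 * ((w * w') ^ 2 - 36 * (w * w') - w ^ 2 - w' ^ 2 + 285) =
      x * (2 * (y ^ 3 - 15 * y ^ 2 - 15 * y + 1) * x ^ 2
        + (y ^ 4 - 28 * y ^ 3 + 190 * y ^ 2 - 28 * y + 1) * x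
        + 2 * y * (y ^ 3 - 15 * y ^ 2 - 15 * y + 1)) := by
  calc _ = (x * w) ^ 2 * (y * w') ^ 2 - 36 * x * y * (x * w) * (y * w')
        - y ^ 2 * (x * w) ^ 2 - x ^ 2 * (y * w') ^ 2 + 285 * x ^ 2 * y ^ 2 := by ring
    _ = _ := by rw [hw, hw']; ring

def shear : ℤ × ℤ ≃+ ℤ × ℤ where
  toFun p := (p.1 + p.2, -p.2)
  invFun p := (p.1 + p.2, -p.2)
  left_inv p := by simp
  right_inv p := by simp
  map_add' p q := by ext <;> simp <;> ring

-- `z₁ ↦ x`, `z₂ ↦ x y⁻¹`, with `x = T 1` the outer and `y = C (T 1)` the inner variable.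
noncomputable def shearEquiv : LaurentZZ ≃+* ℂ[T;T⁻¹][T;T⁻¹] :=
  ((AddMonoidAlgebra.domCongr ℂ ℂ shear).trans (AddMonoidAlgebra.curryAlgEquiv ℂ)).toRingEquiv

theorem shearEquiv_single (a b : ℤ) (c : ℂ) :
    shearEquiv (AddMonoidAlgebra.single (a, b) c) = C (C c * T (-b)) * T (a + b) := by
  show AddMonoidAlgebra.curryAlgEquiv ℂ
    (AddMonoidAlgebra.domCongr ℂ ℂ shear (AddMonoidAlgebra.single (a, b) c)) = _
  rw [AddMonoidAlgebra.domCongr_single, AddMonoidAlgebra.curryAlgEquiv_single, single_eq_C_mul_T,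
    single_eq_C_mul_T]
  rfl

theorem shearEquiv_zz (a b : ℤ) : shearEquiv (zz a b) = C (T (-b)) * T (a + b) := by
  rw [zz, shearEquiv_single, map_one, one_mul]

theorem mul_shearEquiv_w :
    T 1 * shearEquiv (1 + zz (-1) 0 + zz 0 (-1)) = 1 + T 1 + C (T 1) := by
  have hT : (T 1 : ℂ[T;T⁻¹][T;T⁻¹]) * T (-1) = 1 := by rw [← T_add]; simp
  norm_num [shearEquiv_zz]
  linear_combination (1 + C (T 1)) * hT

theorem mul_shearEquiv_w' :
    C (T 1) * shearEquiv (1 + zz 1 0 + zz 0 1) = T 1 + C (T 1) + T 1 * C (T 1) := by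
  have hC : (C (T 1) : ℂ[T;T⁻¹][T;T⁻¹]) * C (T (-1)) = 1 := by rw [← map_mul, ← T_add]; simp
  norm_num [shearEquiv_zz]
  linear_combination T 1 * hC

theorem shearEquiv_det_mul {w w' : LaurentZZ} (hw : T 1 * shearEquiv w = 1 + T 1 + C (T 1))
    (hw' : C (T 1) * shearEquiv w' = T 1 + C (T 1) + T 1 * C (T 1)) :
    shearEquiv (bilayerMatrix w w').det * (T 1 * C (T 2)) = Polynomial.toLaurent Q := by
  refine (isUnit_T 1).mul_left_cancel ?_
  have hC2 : (C (T 2) : ℂ[T;T⁻¹][T;T⁻¹]) = C (T 1) ^ 2 := by rw [← map_pow, T_pow]; norm_num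
  rw [det_bilayerMatrix, hC2]
  simp only [Q, K, L, map_add, map_sub, map_mul, map_pow, map_ofNat, map_one,
    Polynomial.toLaurent_C, Polynomial.toLaurent_X]
  linear_combination bilayer_identity hw hw'

theorem irreducible_det :
    Irreducible (bilayerMatrix (1 + zz (-1) 0 + zz 0 (-1)) (1 + zz 1 0 + zz 0 1)).det := by
  rw [← MulEquiv.irreducible_iff shearEquiv]
  refine (Associated.irreducible_iff ⟨((isUnit_T 1).mul ((isUnit_T 2).map C)).unit, ?_⟩).mpr
    irreducible_toLaurent_Q
  exact shearEquiv_det_mul mul_shearEquiv_w mul_shearEquiv_w'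

theorem isMonomial_of_isUnit {f : LaurentZZ} (hf : IsUnit f) : f.IsMonomial := by
  obtain ⟨u, n, hu, hfu⟩ := exists_C_mul_T_of_isUnit (hf.map shearEquiv)
  obtain ⟨c, m, -, rfl⟩ := exists_C_mul_T_of_isUnit hu
  refine ⟨(n + m, -m), c, shearEquiv.injective ?_⟩
  rw [hfu, shearEquiv_single, neg_neg, add_neg_cancel_right]

end CrossedBilayer

theorem crossed_bilayer_irreducible :
    ¬ ∃ f g : LaurentZZ,
      ((!![-3, 0, 1 + zz (-1) 0 + zz 0 (-1), 0;
           0, -3, 0, 1 + zz (-1) 0 + zz 0 (-1);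
           1 + zz 1 0 + zz 0 1, 0, -3, 0;
           0, 1 + zz 1 0 + zz 0 1, 0, -3] +
        !![-1, 0, 0, 1;
           0, -2, 1, 0;
           0, 1, -1, 0;
           1, 0, 0, -1] : Matrix (Fin 4) (Fin 4) LaurentZZ).det = f * g)
      ∧ ¬ f.IsMonomial ∧ ¬ g.IsMonomial := by
  rintro ⟨f, g, hfg, hf, hg⟩
  rcases CrossedBilayer.irreducible_det.isUnit_or_isUnit hfg with hu | hu
  · exact hf (CrossedBilayer.isMonomial_of_isUnit hu)
  · exact hg (CrossedBilayer.isMonomial_of_isUnit hu)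
end
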